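/- For every fixed λ > 0, the map γ ↦ γ^{1/3}·H_γ(λ) is non-increasing on (0,∞); that is, for all 0 < γ₁ < γ₂ one has γ₁^{1/3}·H_{γ₁}(λ) ≥ γ₂^{1/3}·H_{γ₂}(λ). -/

import Mathlib

open scoped BigOperators Classical
open Real Filter

namespace CriticalPrewetting

/-- `n`-fold convolution of `p`, with `conv p 0` the point mass at `0`. -/
noncomputable def conv (p : ℤ → ℝ) : ℕ → ℤ → ℝ
  | 0 => fun k => if k = 0 then 1 else 0
  | n + 1 => fun k => ∑' j : ℤ, conv p n j * p (k - j)

/-- Standing assumptions on the step distribution `p`: a probability mass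
function on `ℤ` with zero mean, finite variance, strictly aperiodic. -/
structure StepPMF (p : ℤ → ℝ) : Prop where
  nonneg : ∀ k, 0 ≤ p k
  summable : Summable p
  total : (∑' k : ℤ, p k) = 1
  mean_summable : Summable fun k : ℤ => (k : ℝ) * p k
  mean_zero : (∑' k : ℤ, (k : ℝ) * p k) = 0
  var_summable : Summable fun k : ℤ => (k : ℝ) ^ 2 * p k
  aperiodic : ∃ A : ℕ, 0 < A ∧ ∀ n : ℕ, A ≤ n →
      0 < conv p n (-1) ∧ 0 < conv p n 0 ∧ 0 < conv p n 1

/-- Standing assumptions on the potential `V` (viewed on `[0,∞)`): convex,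
continuous, strictly increasing, `V 0 = 0`, `V x → ∞`. -/
structure Potential (V : ℝ → ℝ) : Prop where
  nonneg : ∀ x, 0 ≤ x → 0 ≤ V x
  zero : V 0 = 0
  convexOn : ConvexOn ℝ (Set.Ici (0 : ℝ)) V
  continuousOn : ContinuousOn V (Set.Ici (0 : ℝ))
  strictMonoOn : StrictMonoOn V (Set.Ici (0 : ℝ))
  tendsto_atTop : Tendsto V atTop atTop

/-- Bounded growth of `V` at infinity, controlled by `f`:
`limsup_{x→∞} V(αx)/V(x) ≤ f α < ∞` for every `α > 0`. -/
def BoundedGrowth (V : ℝ → ℝ) (f : ℝ → ℝ) : Prop :=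
  ∀ α : ℝ, 0 < α → 0 < f α ∧ limsup (fun x => V (α * x) / V x) atTop ≤ f α

/-- `X` is an admissible nonnegative trajectory on `{0, …, N}` from `a` to `b`,
extended by `0` beyond `N`. -/
def IsTraj (N : ℕ) (a b : ℤ) (X : ℕ → ℤ) : Prop :=
  X 0 = a ∧ X N = b ∧ (∀ i, 0 ≤ X i) ∧ ∀ i, N < i → X i = 0

/-- The weight `exp(-λ Σ_{i=1}^{N-1} V(X_i)) Π_{i=0}^{N-1} p(X_{i+1}-X_i)`
of a trajectory. -/
noncomputable def weight (p : ℤ → ℝ) (V : ℝ → ℝ) (lam : ℝ) (N : ℕ) (a b : ℤ)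
    (X : ℕ → ℤ) : ℝ :=
  if IsTraj N a b X then
    Real.exp (-lam * ∑ i ∈ Finset.Ioo 0 N, V ((X i : ℝ))) *
      ∏ i ∈ Finset.range N, p (X (i + 1) - X i)
  else 0

/-- The partition function `Z_{N,+}^{λ,a,b}`. -/
noncomputable def Zpart (p : ℤ → ℝ) (V : ℝ → ℝ) (lam : ℝ) (N : ℕ) (a b : ℤ) : ℝ :=
  ∑' X : ℕ → ℤ, weight p V lam N a b X

/-- The probability `P_{N,+}^{λ,a,b}(A)` of a set `A` of trajectories. -/
noncomputable def prob (p : ℤ → ℝ) (V : ℝ → ℝ) (lam : ℝ) (N : ℕ) (a b : ℤ)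
    (A : Set (ℕ → ℤ)) : ℝ :=
  (∑' X : ℕ → ℤ, Set.indicator A (weight p V lam N a b) X) / Zpart p V lam N a b

/-- Conditional probability `P_{N,+}^{λ,a,b}(A ∣ B)`. -/
noncomputable def condProb (p : ℤ → ℝ) (V : ℝ → ℝ) (lam : ℝ) (N : ℕ) (a b : ℤ)
    (A B : Set (ℕ → ℤ)) : ℝ :=
  prob p V lam N a b (A ∩ B) / prob p V lam N a b B

/-- Expectation `E_{N,+}^{λ,a,b}[g]`. -/
noncomputable def expect (p : ℤ → ℝ) (V : ℝ → ℝ) (lam : ℝ) (N : ℕ) (a b : ℤ)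
    (g : (ℕ → ℤ) → ℝ) : ℝ :=
  (∑' X : ℕ → ℤ, g X * weight p V lam N a b X) / Zpart p V lam N a b

/-- Admissible nonnegative trajectory on the integer interval `{l, …, r}`. -/
def IsTrajI (l r : ℕ) (a b : ℤ) (X : ℕ → ℤ) : Prop :=
  X l = a ∧ X r = b ∧ (∀ i, 0 ≤ X i) ∧ (∀ i, i < l → X i = 0) ∧ ∀ i, r < i → X i = 0

/-- Weight of a trajectory on the interval `(l, r)`. -/
noncomputable def weightI (p : ℤ → ℝ) (V : ℝ → ℝ) (lam : ℝ) (l r : ℕ) (a b : ℤ)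
    (X : ℕ → ℤ) : ℝ :=
  if IsTrajI l r a b X then
    Real.exp (-lam * ∑ i ∈ Finset.Ioo l r, V ((X i : ℝ))) *
      ∏ i ∈ Finset.Ico l r, p (X (i + 1) - X i)
  else 0

/-- The probability `P_{(l,r),+}^{λ,a,b}(A)`. -/
noncomputable def probI (p : ℤ → ℝ) (V : ℝ → ℝ) (lam : ℝ) (l r : ℕ) (a b : ℤ)
    (A : Set (ℕ → ℤ)) : ℝ :=
  (∑' X : ℕ → ℤ, Set.indicator A (weightI p V lam l r a b) X) /
    ∑' X : ℕ → ℤ, weightI p V lam l r a b X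

/-- Conditional probability `P_{(l,r),+}^{λ,a,b}(A ∣ B)`. -/
noncomputable def condProbI (p : ℤ → ℝ) (V : ℝ → ℝ) (lam : ℝ) (l r : ℕ) (a b : ℤ)
    (A B : Set (ℕ → ℤ)) : ℝ :=
  probI p V lam l r a b (A ∩ B) / probI p V lam l r a b B

/-- Joint (product) probability for two independent trajectories. -/
noncomputable def prob2 (p : ℤ → ℝ) (V : ℝ → ℝ) (lam : ℝ) (N : ℕ)
    (a₁ b₁ a₂ b₂ : ℤ) (A : Set ((ℕ → ℤ) × (ℕ → ℤ))) : ℝ :=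
  (∑' q : (ℕ → ℤ) × (ℕ → ℤ),
      Set.indicator A
        (fun q => weight p V lam N a₁ b₁ q.1 * weight p V lam N a₂ b₂ q.2) q) /
    (Zpart p V lam N a₁ b₁ * Zpart p V lam N a₂ b₂)

/-- Bridge weight for the unconstrained walk: path from `0` to `d` in `m`
steps, extended by `0` beyond `m`. -/
noncomputable def rwWeight (p : ℤ → ℝ) (m : ℕ) (d : ℤ) (X : ℕ → ℤ) : ℝ :=
  if X 0 = 0 ∧ X m = d ∧ ∀ i, m < i → X i = 0 then
    ∏ i ∈ Finset.range m, p (X (i + 1) - X i)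
  else 0

/-- `P(S_m = d)`. -/
noncomputable def rwZ (p : ℤ → ℝ) (m : ℕ) (d : ℤ) : ℝ :=
  ∑' X : ℕ → ℤ, rwWeight p m d X

/-- The conditional probability `P(A ∣ S_m = d)`, the path `X` playing the
role of `(S_0, S_1, S_2, …)`. -/
noncomputable def rwProb (p : ℤ → ℝ) (m : ℕ) (d : ℤ) (A : Set (ℕ → ℤ)) : ℝ :=
  (∑' X : ℕ → ℤ, Set.indicator A (rwWeight p m d) X) / rwZ p m d

/-
Write `aᵢ = γᵢ^{1/3}` and `s = a₂ / a₁ ≥ 1`, so `γ₂ = s³ γ₁`. Convexity of `V` with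
`V 0 = 0` gives the superhomogeneity `s² V(x) ≤ V(s² x)`, hence `λ (H/s)² V(2 γ₂ (H/s)) ≥ λ H² V(2 γ₁ H)`:
rescaling `H₁` to `H₁ / s` keeps the left side of the defining equation at least `1`.
Since `H ↦ λ H² V(2 γ₂ H)` is strictly increasing, `H₂ ≤ H₁ / s`, i.e. `a₂ H₂ ≤ a₁ H₁`.
-/

theorem _root_.ConvexOn.mul_apply_le_apply_mul {𝕜 : Type*} [Field 𝕜] [LinearOrder 𝕜]
    [IsStrictOrderedRing 𝕜] {f : 𝕜 → 𝕜} (hf : ConvexOn 𝕜 (Set.Ici 0) f) (h0 : f 0 ≤ 0)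
    {α x : 𝕜} (hα : 1 ≤ α) (hx : 0 ≤ x) : α * f x ≤ f (α * x) := by
  have hα₀ : 0 < α := zero_lt_one.trans_le hα
  have hw : 0 ≤ 1 - α⁻¹ := sub_nonneg.2 (inv_le_one_of_one_le₀ hα)
  have h := hf.2 (Set.mem_Ici.2 (mul_nonneg hα₀.le hx)) Set.self_mem_Ici
    (inv_nonneg.2 hα₀.le) hw (add_sub_cancel _ 1)
  rw [smul_eq_mul, smul_zero, add_zero, inv_mul_cancel_left₀ hα₀.ne', smul_eq_mul,
    smul_eq_mul] at h
  have h' : f x ≤ α⁻¹ * f (α * x) :=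
    h.trans (add_le_of_nonpos_right (mul_nonpos_of_nonneg_of_nonpos hw h0))
  rwa [le_inv_mul_iff₀ hα₀] at h'

namespace Potential

variable {V : ℝ → ℝ}

theorem strictMonoOn_mul_sq_mul (hV : Potential V) {lam k : ℝ} (hlam : 0 < lam) (hk : 0 < k) :
    StrictMonoOn (fun H => lam * H ^ 2 * V (k * H)) (Set.Ioi 0) := by
  intro x (hx : 0 < x) y (hy : 0 < y) hxy
  have hVx : 0 < V (k * x) := hV.zero ▸
    hV.strictMonoOn Set.self_mem_Ici (Set.mem_Ici.2 (by positivity)) (by positivity)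
  have hVxy : V (k * x) ≤ V (k * y) := hV.strictMonoOn.monotoneOn
    (Set.mem_Ici.2 (by positivity)) (Set.mem_Ici.2 (by positivity)) (by gcongr)
  have hsq : lam * x ^ 2 < lam * y ^ 2 := by gcongr
  exact mul_lt_mul hsq hVxy hVx (by positivity)

theorem mul_sq_le_rescale (hV : Potential V) {lam γ H s : ℝ} (hlam : 0 ≤ lam)
    (hγ : 0 ≤ γ) (hH : 0 ≤ H) (hs : 1 ≤ s) :
    lam * H ^ 2 * V (2 * γ * H) ≤ lam * (H / s) ^ 2 * V (2 * (s ^ 3 * γ) * (H / s)) := by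
  have hs₀ : s ≠ 0 := (zero_lt_one.trans_le hs).ne'
  have harg : 2 * (s ^ 3 * γ) * (H / s) = s ^ 2 * (2 * γ * H) := by field_simp
  have hsuper := hV.convexOn.mul_apply_le_apply_mul hV.zero.le (one_le_pow₀ hs (n := 2))
    (by positivity : 0 ≤ 2 * γ * H)
  calc lam * H ^ 2 * V (2 * γ * H) = lam * (H / s) ^ 2 * (s ^ 2 * V (2 * γ * H)) := by
        field_simp
    _ ≤ lam * (H / s) ^ 2 * V (2 * (s ^ 3 * γ) * (H / s)) := by
        rw [harg]; gcongr

end Potential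

/-- `γ ↦ γ^{1/3} H_γ(λ)` is non-increasing, where `H_γ(λ)` is the unique
positive solution of `λ H² V(2γH) = 1`. -/
theorem Hgamma_cubeRoot_antitone (V : ℝ → ℝ) (hV : Potential V) :
    ∀ lam : ℝ, 0 < lam → ∀ γ₁ γ₂ H₁ H₂ : ℝ,
      0 < γ₁ → γ₁ < γ₂ → 0 < H₁ → 0 < H₂ →
      lam * H₁ ^ 2 * V (2 * γ₁ * H₁) = 1 →
      lam * H₂ ^ 2 * V (2 * γ₂ * H₂) = 1 →
      γ₂ ^ ((1 : ℝ) / 3) * H₂ ≤ γ₁ ^ ((1 : ℝ) / 3) * H₁ := by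
  intro lam hlam γ₁ γ₂ H₁ H₂ hγ₁ hγ₁₂ hH₁ hH₂ hH₁eq hH₂eq
  have hγ₂ : 0 < γ₂ := hγ₁.trans hγ₁₂
  set a₁ := γ₁ ^ ((1 : ℝ) / 3)
  set a₂ := γ₂ ^ ((1 : ℝ) / 3)
  have ha₁ : 0 < a₁ := by positivity
  have ha₂ : 0 < a₂ := by positivity
  have hcube {γ : ℝ} (hγ : 0 ≤ γ) : (γ ^ ((1 : ℝ) / 3)) ^ 3 = γ := by
    simpa using Real.rpow_inv_natCast_pow hγ three_ne_zero
  set s := a₂ / a₁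
  have hs : 1 ≤ s := (one_le_div ha₁).2 (Real.rpow_le_rpow hγ₁.le hγ₁₂.le (by norm_num))
  have hsγ : s ^ 3 * γ₁ = γ₂ := by
    rw [div_pow, hcube hγ₂.le, hcube hγ₁.le, div_mul_cancel₀ _ hγ₁.ne']
  have hH₂le : H₂ ≤ H₁ / s := by
    refine ((hV.strictMonoOn_mul_sq_mul hlam (by positivity : (0 : ℝ) < 2 * γ₂)).le_iff_le
      hH₂ (by positivity : 0 < H₁ / s)).1 ?_
    rw [hH₂eq, ← hH₁eq, ← hsγ]
    exact hV.mul_sq_le_rescale hlam.le hγ₁.le hH₁.le hs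
  calc a₂ * H₂ ≤ a₂ * (H₁ / s) := by gcongr
    _ = a₁ * H₁ := by simp only [s]; field_simp

end CriticalPrewetting
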